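/- arXiv:math/0401133 — 2 statements merged into one kernel-verified Lean document; each statement's English description precedes it below -/
import Mathlib

section
/- Let G be a finitely generated group with finitely generated subgroups H_1,…,H_n, and for i = 1,…,n let X_i be a nontrivial H_i-almost invariant subset of G. Suppose the family X_1,…,X_n is in good position. Then the relation ≤ is a partial order on E = E(X_1,…,X_n): it is reflexive, antisymmetric (U ≤ V and V ≤ U imply U = V), and transitive. -/
open Pointwise

universe u v

section Defs

variable {G : Type v} [Group G]

/-- `W` is `H`-finite: `W` is contained in the union of finitely many left cosets of `H`. -/
def HFin (H : Subgroup G) (W : Set G) : Prop :=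
  ∃ F : Finset G, W ⊆ (H : Set G) * (F : Set G)

/-- `X` is an `H`-almost invariant subset of `G`: `HX = X` and for every `a : G`
the symmetric difference of `X` and `Xa` is `H`-finite. -/
def AlmostInv (H : Subgroup G) (X : Set G) : Prop :=
  (∀ h ∈ H, h • X = X) ∧
    ∀ a : G, HFin H ((X \ (· * a) '' X) ∪ ((· * a) '' X \ X))

/-- `X` is a nontrivial `H`-almost invariant subset of `G`. -/
def NontrivAI (H : Subgroup G) (X : Set G) : Prop :=
  AlmostInv H X ∧ ¬ HFin H X ∧ ¬ HFin H Xᶜ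

/-- `X ~ Y` : the symmetric difference of `X` and `Y` is `H`-finite. -/
def AIEquiv (H : Subgroup G) (X Y : Set G) : Prop :=
  HFin H ((X \ Y) ∪ (Y \ X))

/-- `H` and `K` are commensurable: `H ⊓ K` has finite index in both `H` and `K`. -/
def CommSub (H K : Subgroup G) : Prop :=
  ((H ⊓ K).subgroupOf H).index ≠ 0 ∧ ((H ⊓ K).subgroupOf K).index ≠ 0

/-- `E(X₁,…,Xₙ)`: the set of all translates of the `Xᵢ` and of their complements. -/
def ESet {ι : Type*} (X : ι → Set G) : Set (Set G) :=
  {A | ∃ (i : ι) (g : G), A = g • X i ∨ A = (g • X i)ᶜ}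

/-- `W` is small with respect to `U ∈ E`: `W` is `gHᵢg⁻¹`-finite, where `U = gXᵢ` or
`U = (gXᵢ)ᶜ` (so that `U` is almost invariant over `gHᵢg⁻¹`). -/
def SmallFor {ι : Type*} (H : ι → Subgroup G) (X : ι → Set G) (U W : Set G) : Prop :=
  ∃ (i : ι) (g : G), (U = g • X i ∨ U = (g • X i)ᶜ) ∧ HFin (H i) (g⁻¹ • W)

/-- Condition (*) (good position): if two of the four corners of a pair of elements
of `E` are small, then one of the four corners is empty. -/
def GoodPos {ι : Type*} (H : ι → Subgroup G) (X : ι → Set G) : Prop :=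
  ∀ U ∈ ESet X, ∀ V ∈ ESet X, ∀ p q : Fin 4, p ≠ q →
    SmallFor H X U (![U ∩ V, U ∩ Vᶜ, Uᶜ ∩ V, Uᶜ ∩ Vᶜ] p) →
    SmallFor H X U (![U ∩ V, U ∩ Vᶜ, Uᶜ ∩ V, Uᶜ ∩ Vᶜ] q) →
    U ∩ V = ∅ ∨ U ∩ Vᶜ = ∅ ∨ Uᶜ ∩ V = ∅ ∨ Uᶜ ∩ Vᶜ = ∅

/-- Almost inclusion: `U ≤ V` iff `U ∩ Vᶜ` is empty or is the only small corner
among the four corners of `(U, V)`. -/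
def LeE {ι : Type*} (H : ι → Subgroup G) (X : ι → Set G) (U V : Set G) : Prop :=
  U ∩ Vᶜ = ∅ ∨
    (SmallFor H X U (U ∩ Vᶜ) ∧ ¬ SmallFor H X U (U ∩ V) ∧
      ¬ SmallFor H X U (Uᶜ ∩ V) ∧ ¬ SmallFor H X U (Uᶜ ∩ Vᶜ))

/-- `E(Y)` for a single almost invariant set. -/
def ESet1 (Y : Set G) : Set (Set G) := ESet (fun _ : Unit => Y)

def SmallFor1 (K : Subgroup G) (Y : Set G) (U W : Set G) : Prop :=
  SmallFor (fun _ : Unit => K) (fun _ : Unit => Y) U W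

def GoodPos1 (K : Subgroup G) (Y : Set G) : Prop :=
  GoodPos (fun _ : Unit => K) (fun _ : Unit => Y)

def LeE1 (K : Subgroup G) (Y : Set G) (U V : Set G) : Prop :=
  LeE (fun _ : Unit => K) (fun _ : Unit => Y) U V

/-- `Y` is invertible: some `g ∈ G` satisfies `gY = Y*`. -/
def InvertibleSet (Y : Set G) : Prop := ∃ g : G, g • Y = Yᶜ

/-- There is a `G`-equivariant bijection `E(Y₁) → E(Y₂)` preserving complementation,
the partial order of almost inclusion, and equivalence classes. -/
def GoodBij (K₁ : Subgroup G) (Y₁ : Set G) (K₂ : Subgroup G) (Y₂ : Set G) : Prop :=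
  ∃ φ : Set G → Set G,
    Set.BijOn φ (ESet1 Y₁) (ESet1 Y₂) ∧
    (∀ (g : G), ∀ U ∈ ESet1 Y₁, φ (g • U) = g • φ U) ∧
    (∀ U ∈ ESet1 Y₁, ∀ V ∈ ESet1 Y₁, LeE1 K₁ Y₁ U V → LeE1 K₂ Y₂ (φ U) (φ V)) ∧
    (∀ U ∈ ESet1 Y₁, φ Uᶜ = (φ U)ᶜ) ∧
    (∀ U ∈ ESet1 Y₁, SmallFor1 K₁ Y₁ U ((U \ φ U) ∪ (φ U \ U)))

/-- `x` lies in the ball of radius `R` about `g` in the word metric determined by `S`. -/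
def InBall (S : Finset G) (R : ℕ) (g x : G) : Prop :=
  ∃ l : List G, (∀ s ∈ l, s ∈ S ∨ s⁻¹ ∈ S) ∧ l.length ≤ R ∧ x = g * l.prod

/-- Some edge of the Cayley graph of `(G,S)` with one endpoint in `A` and the other in
`Aᶜ` has an endpoint in the ball `N_R(g)`. -/
def BNear (S : Finset G) (R : ℕ) (g : G) (A : Set G) : Prop :=
  ∃ x s : G, (s ∈ S ∨ s⁻¹ ∈ S) ∧
    ((x ∈ A ∧ x * s ∉ A) ∨ (x ∉ A ∧ x * s ∈ A)) ∧
    (InBall S R g x ∨ InBall S R g (x * s))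

/-- `E_R* = E − E_R`: the elements of `E` no edge of whose coboundary meets `N_R(g)`. -/
def ERstar (S : Finset G) (R : ℕ) (g : G) {ι : Type*} (X : ι → Set G) : Set (Set G) :=
  {A | A ∈ ESet X ∧ ¬ BNear S R g A}

/-- `U_g = {A ∈ E_R* : g ∈ A}`. -/
def UgSet (S : Finset G) (R : ℕ) (g : G) {ι : Type*} (X : ι → Set G) : Set (Set G) :=
  {A | A ∈ ERstar S R g X ∧ g ∈ A}

/-- `U₁ = U_g ∪ {B ∈ E_R : ∃ A ∈ U_g, A ≤ B}`. -/
def U1Set {ι : Type*} (H : ι → Subgroup G) (S : Finset G) (R : ℕ) (g : G) (X : ι → Set G) :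
    Set (Set G) :=
  UgSet S R g X ∪
    {B | (B ∈ ESet X ∧ BNear S R g B) ∧ ∃ A ∈ UgSet S R g X, LeE H X A B}

/-- `V₁ = E − (U₁ ∪ U₁*)`. -/
def V1Set {ι : Type*} (H : ι → Subgroup G) (S : Finset G) (R : ℕ) (g : G) (X : ι → Set G) :
    Set (Set G) :=
  ESet X \ (U1Set H S R g X ∪ (fun B : Set G => Bᶜ) '' U1Set H S R g X)

/-- `U₂ = U₁ ∪ {A₁} ∪ {B ∈ V₁ : A₁ ≤ B}`. -/
def U2Set {ι : Type*} (H : ι → Subgroup G) (S : Finset G) (R : ℕ) (g : G) (X : ι → Set G)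
    (A₁ : Set G) : Set (Set G) :=
  U1Set H S R g X ∪ {A₁} ∪ {B | B ∈ V1Set H S R g X ∧ LeE H X A₁ B}

/-- `G` is (canonically isomorphic to) the amalgamated free product `A *_C B` of its
subgroups `A` and `B` over `C`, expressed via the universal property of the pushout. -/
def IsAmalgam (C A B : Subgroup G) : Prop :=
  C ≤ A ∧ C ≤ B ∧
    ∀ (P : Type u) [Group P] (f : ↥A →* P) (g : ↥B →* P),
      (∀ (c : G) (hcA : c ∈ A) (hcB : c ∈ B), c ∈ C → f ⟨c, hcA⟩ = g ⟨c, hcB⟩) →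
      ∃! h : G →* P, (∀ (a : G) (ha : a ∈ A), h a = f ⟨a, ha⟩) ∧
        (∀ (b : G) (hb : b ∈ B), h b = g ⟨b, hb⟩)

/-- `G` is (canonically isomorphic to) an HNN extension with associated subgroup `C`:
there are a base subgroup `K`, associated subgroups `C, D ≤ K`, an isomorphism
`φ : C ≃ D` and a stable letter `t` conjugating `C` to `D` via `φ`, such that `G` has
the universal property of the HNN extension. -/
def IsHNNOver (C : Subgroup G) : Prop :=
  ∃ (K D : Subgroup G) (t : G) (φ : ↥C ≃* ↥D),
    C ≤ K ∧ D ≤ K ∧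
    (∀ c : ↥C, t⁻¹ * (c : G) * t = ((φ c : ↥D) : G)) ∧
    ∀ (P : Type u) [Group P] (f : ↥K →* P) (p : P),
      (∀ (c : ↥C) (hc : (c : G) ∈ K) (hc' : ((φ c : ↥D) : G) ∈ K),
        p⁻¹ * f ⟨(c : G), hc⟩ * p = f ⟨((φ c : ↥D) : G), hc'⟩) →
      ∃! h : G →* P, (∀ (k : G) (hk : k ∈ K), h k = f ⟨k, hk⟩) ∧ h t = p

/-- `G` splits over `C`: `G` is an amalgamated free product `A *_C B` in which `C` is a
proper subgroup of both `A` and `B`, or an HNN extension with associated subgroup `C`. -/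
def SplitsOver (C : Subgroup G) : Prop :=
  (∃ A B : Subgroup G, C ≠ A ∧ C ≠ B ∧ IsAmalgam.{u} C A B) ∨ IsHNNOver.{u} C

end Defs

/-!
Everything rests on one finiteness lemma: if `V` is `H`-invariant but not `H`-finite, `Y` is
`K`-almost invariant, and `Z ⊆ Y` with `Z` and `V ∩ Y` both `H`-finite, then `Z` is
`K`-finite. Either `Z` has points arbitrarily deep
inside `Y`, and translating deep points of `Z = H F` by `F⁻¹ x` pushes every `x ∈ V` into
`V ∩ Y` up to `H`, making `V` itself `H`-finite; or every point of `Z` leaves `Y` after one of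
finitely many right translations, so `Z` lies in finitely many sets `Y \ Y t`, each `K`-finite.

Hence smallness of a corner is independent of the set of `E` used to measure it, and under
good position `U ≤ V` becomes "`U ⊆ V`, or `U ∩ V*` is small and `V ⊄ U`":
two small corners force an inclusion, since emptiness of `U ∩ V` or `U* ∩ V*` would make
`U` or `V*` small over itself. Antisymmetry and transitivity are then a short case analysis.
-/

open Set

theorem inter_compl_eq_empty_iff {α : Type*} {s t : Set α} : s ∩ tᶜ = ∅ ↔ s ⊆ t := by
  rw [← sdiff_eq, sdiff_eq_empty]

theorem compl_eq_or_compl_eq_compl_iff {α : Type*} {s t : Set α} :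
    (sᶜ = t ∨ sᶜ = tᶜ) ↔ (s = t ∨ s = tᶜ) :=
  (or_congr (compl_eq_comm.trans eq_comm) compl_inj_iff).trans or_comm

section HFin

variable {G : Type*} [Group G] {H : Subgroup G} {W W' : Set G}

theorem HFin.mono (h : HFin H W) (hsub : W' ⊆ W) : HFin H W' :=
  let ⟨F, hF⟩ := h
  ⟨F, hsub.trans hF⟩

theorem hfin_empty : HFin H (∅ : Set G) := ⟨∅, empty_subset _⟩

theorem HFin.union (h : HFin H W) (h' : HFin H W') : HFin H (W ∪ W') := by
  classical
  obtain ⟨F, hF⟩ := h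
  obtain ⟨F', hF'⟩ := h'
  refine ⟨F ∪ F', union_subset (hF.trans ?_) (hF'.trans ?_)⟩ <;>
    exact mul_subset_mul_left (by simp)

theorem HFin.biUnion {α : Type*} {T : Finset α} {D : α → Set G}
    (h : ∀ t ∈ T, HFin H (D t)) : HFin H (⋃ t ∈ T, D t) := by
  classical
  choose! F hF using h
  refine ⟨T.biUnion F, iUnion₂_subset fun t ht => (hF t ht).trans ?_⟩
  exact mul_subset_mul_left (Finset.coe_subset.2 (Finset.subset_biUnion_of_mem F ht))

theorem mem_conj_smul {g x : G} : x ∈ MulAut.conj g • H ↔ g⁻¹ * x * g ∈ H := by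
  rw [Subgroup.mem_pointwise_smul_iff_inv_smul_mem, MulAut.smul_def, MulAut.conj_inv_apply]

theorem HFin.smul (h : HFin H W) (g : G) : HFin (MulAut.conj g • H) (g • W) := by
  classical
  obtain ⟨F, hF⟩ := h
  refine ⟨F.image (g * ·), ?_⟩
  rintro _ ⟨w, hw, rfl⟩
  obtain ⟨k, hk, f, hf, rfl⟩ := hF hw
  refine ⟨g * k * g⁻¹, mem_conj_smul.2 (by simpa [mul_assoc] using hk), g * f,
    by simpa using hf, ?_⟩
  simp [mul_assoc]

theorem hfin_conj_smul_iff {g : G} : HFin (MulAut.conj g • H) W ↔ HFin H (g⁻¹ • W) := by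
  refine ⟨fun h => ?_, fun h => by simpa using h.smul g⟩
  simpa [smul_smul, ← map_mul] using h.smul g⁻¹

end HFin

section AlmostInv

variable {G : Type*} [Group G] {H : Subgroup G} {Y : Set G}

theorem AlmostInv.compl (h : AlmostInv H Y) : AlmostInv H Yᶜ := by
  refine ⟨fun k hk => by rw [smul_set_compl, h.1 k hk], fun a => ?_⟩
  rw [image_compl_eq (Group.mulRight_bijective a), compl_sdiff_compl, compl_sdiff_compl,
    union_comm]
  exact h.2 a

theorem AlmostInv.smul (h : AlmostInv H Y) (g : G) : AlmostInv (MulAut.conj g • H) (g • Y) := by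
  have image_mul_right_smul (a : G) : (· * a) '' (g • Y) = g • ((· * a) '' Y) := by
    ext x; simp [mem_smul_set_iff_inv_smul_mem, mul_assoc]
  refine ⟨fun k hk => ?_, fun a => ?_⟩
  · have hk' : k * g = g * (g⁻¹ * k * g) := by group
    rw [smul_smul, hk', ← smul_smul, h.1 _ (mem_conj_smul.1 hk)]
  · simpa only [image_mul_right_smul, smul_set_sdiff, smul_set_union] using (h.2 a).smul g

theorem NontrivAI.compl (h : NontrivAI H Y) : NontrivAI H Yᶜ :=
  ⟨h.1.compl, h.2.2, by simpa using h.2.1⟩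

theorem NontrivAI.smul (h : NontrivAI H Y) (g : G) : NontrivAI (MulAut.conj g • H) (g • Y) :=
  ⟨h.1.smul g, fun hf => h.2.1 (by simpa using hfin_conj_smul_iff.1 hf),
    fun hf => h.2.2 (by simpa [← smul_set_compl] using hfin_conj_smul_iff.1 hf)⟩

end AlmostInv

section Core

variable {G : Type*} [Group G] {H K : Subgroup G} {V W Y Z : Set G}

theorem hfin_of_forall_exists_smul_subset (hV : ∀ h ∈ H, h • V = V) (hZ : HFin H Z)
    (hVY : HFin H (V ∩ Y)) (hdeep : ∀ T : Finset G, ∃ z ∈ Z, z • (T : Set G) ⊆ Y) :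
    HFin H V := by
  classical
  obtain ⟨F, hF⟩ := hZ
  obtain ⟨F', hF'⟩ := hVY
  refine ⟨F', fun x hx => ?_⟩
  obtain ⟨z, hz, hzT⟩ := hdeep (F.image fun f => f⁻¹ * x)
  obtain ⟨h, hh, f, hf, rfl⟩ := hF hz
  have hhx : h * x ∈ V ∩ Y := by
    refine ⟨by rw [← hV h hh]; exact smul_mem_smul_set hx, ?_⟩
    simpa [mul_assoc] using hzT (smul_mem_smul_set (Finset.mem_image_of_mem _ hf))
  obtain ⟨h', hh', f', hf', he⟩ := hF' hhx
  refine ⟨h⁻¹ * h', H.mul_mem (H.inv_mem hh) hh', f', hf', ?_⟩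
  change h' * f' = h * x at he
  change h⁻¹ * h' * f' = x
  rw [mul_assoc, he, inv_mul_cancel_left]

theorem hfin_of_forall_not_smul_subset (hY : AlmostInv K Y) (hZY : Z ⊆ Y) (T : Finset G)
    (hT : ∀ z ∈ Z, ¬ z • (T : Set G) ⊆ Y) : HFin K Z := by
  refine (HFin.biUnion (T := T) fun t _ => (hY.2 t⁻¹).mono subset_union_left).mono fun z hz => ?_
  obtain ⟨_, ⟨t, ht, rfl⟩, hzt⟩ := not_subset.1 (hT z hz)
  exact mem_biUnion ht ⟨hZY hz, by simpa using hzt⟩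

theorem hfin_of_subset_of_hfin_inter (hV : ∀ h ∈ H, h • V = V) (hVfin : ¬ HFin H V)
    (hY : AlmostInv K Y) (hZY : Z ⊆ Y) (hZ : HFin H Z) (hVY : HFin H (V ∩ Y)) :
    HFin K Z := by
  by_cases hdeep : ∀ T : Finset G, ∃ z ∈ Z, z • (T : Set G) ⊆ Y
  · exact absurd (hfin_of_forall_exists_smul_subset hV hZ hVY hdeep) hVfin
  · push Not at hdeep
    obtain ⟨T, hT⟩ := hdeep
    exact hfin_of_forall_not_smul_subset hY hZY T hT

theorem HFin.of_nontrivAI (hH : NontrivAI H Y) (hK : AlmostInv K Y) (hW : HFin H W) :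
    HFin K W := by
  have hYc : ∀ h ∈ H, h • Yᶜ = Yᶜ := hH.compl.1.1
  refine (HFin.union (W := W ∩ Y) (W' := W ∩ Yᶜ) ?_ ?_).mono fun w hw => ?_
  · exact hfin_of_subset_of_hfin_inter hYc hH.2.2 hK inter_subset_right
      (hW.mono inter_subset_left) (by rw [compl_inter_self]; exact hfin_empty)
  · exact hfin_of_subset_of_hfin_inter hH.1.1 hH.2.1 hK.compl inter_subset_right
      (hW.mono inter_subset_left) (by rw [inter_compl_self]; exact hfin_empty)
  · by_cases hwY : w ∈ Y
    exacts [Or.inl ⟨hw, hwY⟩, Or.inr ⟨hw, hwY⟩]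

end Core

section SmallFor

variable {G : Type*} [Group G] {ι : Type*} {H : ι → Subgroup G} {X : ι → Set G}
  {U V W W' Y Z : Set G} {i : ι} {g : G}

theorem nontrivAI_of_eq_smul (hX : NontrivAI (H i) (X i))
    (hU : U = g • X i ∨ U = (g • X i)ᶜ) : NontrivAI (MulAut.conj g • H i) U := by
  rcases hU with rfl | rfl
  exacts [hX.smul g, (hX.smul g).compl]

theorem smallFor_iff : SmallFor H X U W ↔
    ∃ (j : ι) (a : G),
      (U = a • X j ∨ U = (a • X j)ᶜ) ∧ HFin (MulAut.conj a • H j) W := by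
  simp only [SmallFor, hfin_conj_smul_iff]

theorem compl_mem_eSet (hU : U ∈ ESet X) : Uᶜ ∈ ESet X :=
  let ⟨i, g, hrep⟩ := hU
  ⟨i, g, compl_eq_or_compl_eq_compl_iff.2 hrep⟩

theorem smallFor_compl_iff : SmallFor H X Uᶜ W ↔ SmallFor H X U W := by
  simp only [SmallFor, compl_eq_or_compl_eq_compl_iff]

theorem SmallFor.mono (h : SmallFor H X U W) (hsub : W' ⊆ W) : SmallFor H X U W' :=
  let ⟨i, g, hrep, hW⟩ := h
  ⟨i, g, hrep, hW.mono (smul_set_mono hsub)⟩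

theorem smallFor_empty (hU : U ∈ ESet X) : SmallFor H X U ∅ :=
  let ⟨i, g, hrep⟩ := hU
  ⟨i, g, hrep, by simpa using hfin_empty⟩

theorem not_smallFor_self (hX : ∀ i, NontrivAI (H i) (X i)) : ¬ SmallFor H X U U := fun h =>
  let ⟨i, _, hrep, hU⟩ := smallFor_iff.1 h
  (nontrivAI_of_eq_smul (hX i) hrep).2.1 hU

theorem SmallFor.hfin (hX : ∀ i, NontrivAI (H i) (X i)) (h : SmallFor H X U W)
    (hU : U = g • X i ∨ U = (g • X i)ᶜ) : HFin (MulAut.conj g • H i) W :=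
  let ⟨j, _, hrep, hW⟩ := smallFor_iff.1 h
  hW.of_nontrivAI (nontrivAI_of_eq_smul (hX j) hrep) (nontrivAI_of_eq_smul (hX i) hU).1

theorem SmallFor.union (hX : ∀ i, NontrivAI (H i) (X i)) (h : SmallFor H X U W)
    (h' : SmallFor H X U W') : SmallFor H X U (W ∪ W') :=
  let ⟨i, g, hrep, hW⟩ := smallFor_iff.1 h
  smallFor_iff.2 ⟨i, g, hrep, hW.union (h'.hfin hX hrep)⟩

theorem SmallFor.of_subset (hX : ∀ i, NontrivAI (H i) (X i)) (hY : Y ∈ ESet X) (hZY : Z ⊆ Y)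
    (hZ : SmallFor H X V Z) (hVY : SmallFor H X V (V ∩ Y)) : SmallFor H X Y Z := by
  obtain ⟨i, g, hrepV, hZ⟩ := smallFor_iff.1 hZ
  obtain ⟨j, g', hrepY⟩ := hY
  have hV := nontrivAI_of_eq_smul (hX i) hrepV
  exact smallFor_iff.2 ⟨j, g', hrepY, hfin_of_subset_of_hfin_inter hV.1.1 hV.2.1
    (nontrivAI_of_eq_smul (hX j) hrepY).1 hZY hZ (hVY.hfin hX hrepV)⟩

theorem SmallFor.inter_compl_symm (hX : ∀ i, NontrivAI (H i) (X i)) (hV : V ∈ ESet X)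
    (h : SmallFor H X U (U ∩ Vᶜ)) : SmallFor H X V (U ∩ Vᶜ) :=
  smallFor_compl_iff.1 (h.of_subset hX (compl_mem_eSet hV) inter_subset_right h)

end SmallFor

section LeE

variable {G : Type*} [Group G] {ι : Type*} {H : ι → Subgroup G} {X : ι → Set G}
  {U V W : Set G}

theorem subset_or_subset_of_smallFor (hX : ∀ i, NontrivAI (H i) (X i)) (hgp : GoodPos H X)
    (hU : U ∈ ESet X) (hV : V ∈ ESet X) (h : SmallFor H X U (U ∩ Vᶜ)) {q : Fin 4}
    (hq : q ≠ 1) (hq' : SmallFor H X U (![U ∩ V, U ∩ Vᶜ, Uᶜ ∩ V, Uᶜ ∩ Vᶜ] q)) :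
    U ⊆ V ∨ V ⊆ U := by
  rcases hgp U hU V hV 1 q hq.symm h hq' with h₀ | h₁ | h₂ | h₃
  · rw [inter_eq_left.2 (subset_compl_iff_disjoint_right.2 (disjoint_iff_inter_eq_empty.2 h₀))]
      at h
    exact absurd h (not_smallFor_self hX)
  · exact Or.inl (inter_compl_eq_empty_iff.1 h₁)
  · exact Or.inr (inter_compl_eq_empty_iff.1 (by rwa [inter_comm]))
  · have hVU : Vᶜ ⊆ U := by
      simpa using inter_compl_eq_empty_iff.1 (by rwa [inter_comm] at h₃)
    have h' := h.inter_compl_symm hX hV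
    rw [inter_eq_right.2 hVU] at h'
    exact absurd (smallFor_compl_iff.2 h') (not_smallFor_self hX)

theorem subset_or_subset_of_smallFor_inter_compl (hX : ∀ i, NontrivAI (H i) (X i))
    (hgp : GoodPos H X) (hU : U ∈ ESet X) (hV : V ∈ ESet X) (h : SmallFor H X U (U ∩ Vᶜ))
    (h' : SmallFor H X V (V ∩ Uᶜ)) : U ⊆ V ∨ V ⊆ U := by
  refine subset_or_subset_of_smallFor hX hgp hU hV h (q := 2) (by decide) ?_
  simpa [inter_comm] using h'.inter_compl_symm hX hU

theorem leE_iff (hX : ∀ i, NontrivAI (H i) (X i)) (hgp : GoodPos H X) (hU : U ∈ ESet X)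
    (hV : V ∈ ESet X) :
    LeE H X U V ↔ U ⊆ V ∨ (SmallFor H X U (U ∩ Vᶜ) ∧ ¬ V ⊆ U) := by
  constructor
  · rintro (h | ⟨h, -, h₂, -⟩)
    · exact Or.inl (inter_compl_eq_empty_iff.1 h)
    · refine Or.inr ⟨h, fun hVU => h₂ ?_⟩
      rw [inter_comm, inter_compl_eq_empty_iff.2 hVU]
      exact smallFor_empty hU
  · rintro (h | ⟨h, hVU⟩)
    · exact Or.inl (inter_compl_eq_empty_iff.2 h)
    by_cases hUV : U ⊆ V
    · exact Or.inl (inter_compl_eq_empty_iff.2 hUV)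
    have hnot (q : Fin 4) (hq : q ≠ 1) :
        ¬ SmallFor H X U (![U ∩ V, U ∩ Vᶜ, Uᶜ ∩ V, Uᶜ ∩ Vᶜ] q) := fun hq' =>
      (subset_or_subset_of_smallFor hX hgp hU hV h hq hq').elim hUV hVU
    exact Or.inr ⟨h, hnot 0 (by decide), hnot 2 (by decide), hnot 3 (by decide)⟩

theorem LeE.smallFor_inter_compl (hU : U ∈ ESet X) (h : LeE H X U V) :
    SmallFor H X U (U ∩ Vᶜ) :=
  h.elim (fun h => h ▸ smallFor_empty hU) (·.1)

theorem leE_refl : LeE H X U U := Or.inl (inter_compl_self U)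

theorem leE_antisymm (hX : ∀ i, NontrivAI (H i) (X i)) (hgp : GoodPos H X) (hU : U ∈ ESet X)
    (hV : V ∈ ESet X) (h : LeE H X U V) (h' : LeE H X V U) : U = V := by
  rw [leE_iff hX hgp hU hV] at h
  rw [leE_iff hX hgp hV hU] at h'
  rcases h with hUV | ⟨hs, hVU⟩ <;> rcases h' with hVU' | ⟨hs', hUV'⟩
  · exact hUV.antisymm hVU'
  · exact absurd hUV hUV'
  · exact absurd hVU' hVU
  · exact (subset_or_subset_of_smallFor_inter_compl hX hgp hU hV hs hs').elim
      (absurd · hUV') (absurd · hVU)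

theorem LeE.smallFor_inter_compl_trans (hX : ∀ i, NontrivAI (H i) (X i)) (hU : U ∈ ESet X)
    (hV : V ∈ ESet X) (hW : W ∈ ESet X) (h : LeE H X U V) (h' : LeE H X V W) :
    SmallFor H X U (U ∩ Wᶜ) := by
  have hVW := h'.smallFor_inter_compl hV
  have hUW : SmallFor H X V (U ∩ Wᶜ) :=
    ((h.smallFor_inter_compl hU).inter_compl_symm hX hV).union hX hVW |>.mono fun x hx =>
      (em (x ∈ V)).elim (fun hxV => Or.inr ⟨hxV, hx.2⟩) fun hxV => Or.inl ⟨hx.1, hxV⟩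
  have hWc := hUW.of_subset hX (compl_mem_eSet hW) inter_subset_right hVW
  exact hWc.of_subset hX hU inter_subset_left (by rwa [inter_comm])

theorem leE_trans (hX : ∀ i, NontrivAI (H i) (X i)) (hgp : GoodPos H X) (hU : U ∈ ESet X)
    (hV : V ∈ ESet X) (hW : W ∈ ESet X) (h : LeE H X U V) (h' : LeE H X V W) :
    LeE H X U W := by
  have hs := h.smallFor_inter_compl_trans hX hU hV hW h'
  rw [leE_iff hX hgp hU hV] at h
  rw [leE_iff hX hgp hV hW] at h'
  rw [leE_iff hX hgp hU hW]
  by_cases hUW : U ⊆ W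
  · exact Or.inl hUW
  refine Or.inr ⟨hs, fun hWU => ?_⟩
  rcases h' with hVW | ⟨hVW, hWV⟩
  · exact h.elim (fun hUV => hUW (hUV.trans hVW)) fun h => h.2 (hVW.trans hWU)
  rcases h with hUV | ⟨hUV, hVU⟩
  · exact hWV (hWU.trans hUV)
  have hVU' : SmallFor H X V (V ∩ Uᶜ) :=
    hVW.mono (inter_subset_inter_right _ (compl_subset_compl.2 hWU))
  exact (subset_or_subset_of_smallFor_inter_compl hX hgp hU hV hUV hVU').elim
    (fun hUV => hWV (hWU.trans hUV)) hVU

end LeE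

theorem almost_inclusion_is_partial_order_general
    {G : Type*} [Group G] {n : ℕ}
    (H : Fin n → Subgroup G)
    (X : Fin n → Set G) (hnt : ∀ i, NontrivAI (H i) (X i))
    (hgp : GoodPos H X) :
    (∀ U ∈ ESet X, LeE H X U U) ∧
    (∀ U ∈ ESet X, ∀ V ∈ ESet X, LeE H X U V → LeE H X V U → U = V) ∧
    (∀ U ∈ ESet X, ∀ V ∈ ESet X, ∀ W ∈ ESet X,
      LeE H X U V → LeE H X V W → LeE H X U W) :=
  ⟨fun _ _ => leE_refl, fun _ hU _ hV => leE_antisymm hnt hgp hU hV,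
    fun _ hU _ hV _ hW => leE_trans hnt hgp hU hV hW⟩

/-- If the family `X₁,…,Xₙ` is in good position, then almost inclusion is a partial
order on `E(X₁,…,Xₙ)`. -/
theorem almost_inclusion_is_partial_order
    {G : Type*} [Group G] (hG : Group.FG G) {n : ℕ}
    (H : Fin n → Subgroup G) (hfg : ∀ i, (H i).FG)
    (X : Fin n → Set G) (hnt : ∀ i, NontrivAI (H i) (X i))
    (hgp : GoodPos H X) :
    (∀ U ∈ ESet X, LeE H X U U) ∧
    (∀ U ∈ ESet X, ∀ V ∈ ESet X, LeE H X U V → LeE H X V U → U = V) ∧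
    (∀ U ∈ ESet X, ∀ V ∈ ESet X, ∀ W ∈ ESet X,
      LeE H X U V → LeE H X V W → LeE H X U W) :=
  almost_inclusion_is_partial_order_general H X hnt hgp
end

section
/- Let G be a finitely generated group with finitely generated subgroups H_1,…,H_n, for i = 1,…,n let X_i be a nontrivial H_i-almost invariant subset of G, suppose the family is in good position, and let E = E(X_1,…,X_n). Fix a finite generating set of G with word metric d. Then there exists R > 0 such that for all A, B ∈ E with A ≤ B and all g ∈ A, if the ball N_R(g) = {x ∈ G : d(x,g) ≤ R} is contained in A, then g ∈ B. -/
open Pointwise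

universe u v

/-!
The coboundary of each `Xᵢ` is `Hᵢ`-finite, so the walls of `A = a • Xᵢ` and `B = b • Xⱼ` lie
within a bounded distance `Λ` of the cosets `aHᵢ` and `bHⱼ`; suppose `A ∩ B*` is the only small
corner. If the cosets are far apart then, since `Hᵢ` and `Hⱼ` are generated by elements of length
at most `Λ`, membership in `B` is constant along the wall of `A` and vice versa, and this forces
one of the four corners to be empty. If they are close, a translation by an element of `Hᵢ`
brings the pair to one of finitely many configurations, in each of which the small corner lies
in a bounded neighbourhood of `Hᵢ`, hence of `A*`; `R` exceeds all these bounds.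
-/

open Filter

section

variable {G : Type*} [Group G] {S : Finset G} {R R' Λ : ℕ} {g x y : G}

namespace InBall

theorem refl (S : Finset G) (R : ℕ) (g : G) : InBall S R g g :=
  ⟨[], by simp, by simp, by simp⟩

theorem mono (hR : R ≤ R') (h : InBall S R g x) : InBall S R' g x :=
  let ⟨l, hl, hlen, hx⟩ := h
  ⟨l, hl, hlen.trans hR, hx⟩

theorem trans (h : InBall S R g x) (h' : InBall S R' x y) : InBall S (R + R') g y := by
  obtain ⟨l, hl, hlen, rfl⟩ := h
  obtain ⟨l', hl', hlen', rfl⟩ := h'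
  refine ⟨l ++ l', ?_, by simpa using add_le_add hlen hlen', by simp [mul_assoc]⟩
  simpa only [List.mem_append, or_imp, forall_and] using ⟨hl, hl'⟩

theorem symm (h : InBall S R g x) : InBall S R x g := by
  obtain ⟨l, hl, hlen, rfl⟩ := h
  refine ⟨(l.map (·⁻¹)).reverse, ?_, by simpa using hlen, ?_⟩
  · intro s hs
    obtain ⟨t, ht, rfl⟩ := List.mem_map.1 (List.mem_reverse.1 hs)
    simpa [or_comm] using hl t ht
  · rw [← List.prod_inv_reverse]
    group

theorem mul_left_iff (c : G) : InBall S R (c * g) (c * x) ↔ InBall S R g x := by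
  simp only [InBall, mul_assoc, mul_right_inj]

theorem mul_letter {s : G} (hs : s ∈ S ∨ s⁻¹ ∈ S) (x : G) : InBall S 1 x (x * s) :=
  ⟨[s], by simpa using hs, by simp, by simp⟩

theorem exists_of_closure_eq_top (hS : Subgroup.closure (S : Set G) = ⊤) (g x : G) :
    ∃ R, InBall S R g x := by
  have hmem : g⁻¹ * x ∈ Submonoid.closure ((S : Set G) ∪ (S : Set G)⁻¹) := by
    rw [← Subgroup.closure_toSubmonoid, hS]
    trivial
  obtain ⟨l, hl, hprod⟩ := Submonoid.exists_list_of_mem_closure hmem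
  exact ⟨l.length, l, by simpa using hl, le_rfl, by rw [hprod, mul_inv_cancel_left]⟩

theorem eventually_atTop (hS : Subgroup.closure (S : Set G) = ⊤) (g x : G) :
    ∀ᶠ R in atTop, InBall S R g x :=
  let ⟨R, h⟩ := exists_of_closure_eq_top hS g x
  Filter.eventually_atTop.2 ⟨R, fun _ hR => h.mono hR⟩

end InBall

theorem finite_setOf_inBall_one (S : Finset G) (R : ℕ) : {x | InBall S R 1 x}.Finite := by
  induction R with
  | zero =>
    refine (Set.finite_singleton 1).subset ?_
    rintro x ⟨l, -, hlen, rfl⟩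
    simp_all
  | succ R ih =>
    refine ((Set.finite_singleton 1).union
      ((S.finite_toSet.union S.finite_toSet.inv).mul ih)).subset ?_
    rintro x ⟨_ | ⟨s, l⟩, hl, hlen, rfl⟩
    · simp
    · rw [one_mul, List.prod_cons]
      refine Or.inr (Set.mul_mem_mul (by simpa using hl s (by simp)) ?_)
      exact ⟨l, fun t ht => hl t (by simp [ht]), by simpa using hlen, (one_mul _).symm⟩

def wordNbhd (S : Finset G) (R : ℕ) (P : Set G) : Set G :=
  {x | ∃ p ∈ P, InBall S R p x}

section wordNbhd

variable {P Q Z : Set G}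

theorem wordNbhd_mono (hR : R ≤ R') (hPQ : P ⊆ Q) : wordNbhd S R P ⊆ wordNbhd S R' Q :=
  fun _ ⟨p, hp, hx⟩ => ⟨p, hPQ hp, hx.mono hR⟩

theorem wordNbhd_wordNbhd_subset : wordNbhd S R' (wordNbhd S R P) ⊆ wordNbhd S (R + R') P :=
  fun _ ⟨_, ⟨p, hp, hq⟩, hx⟩ => ⟨p, hp, hq.trans hx⟩

theorem wordNbhd_smul (c : G) : wordNbhd S R (c • P) = c • wordNbhd S R P := by
  ext x
  simp only [wordNbhd, Set.mem_smul_set, Set.mem_ofPred_eq, smul_eq_mul]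
  constructor
  · rintro ⟨_, ⟨p, hp, rfl⟩, hx⟩
    exact ⟨c⁻¹ * x, ⟨p, hp, by rwa [← InBall.mul_left_iff c, mul_inv_cancel_left]⟩,
      mul_inv_cancel_left c x⟩
  · rintro ⟨y, ⟨p, hp, hy⟩, rfl⟩
    exact ⟨c * p, ⟨p, hp, rfl⟩, (InBall.mul_left_iff c).2 hy⟩

theorem disjoint_wordNbhd_comm : Disjoint (wordNbhd S R P) Q ↔ Disjoint P (wordNbhd S R Q) := by
  simp only [Set.disjoint_left, wordNbhd, Set.mem_ofPred_eq]
  exact ⟨fun h p hp ⟨q, hq, hpq⟩ => h ⟨p, hp, hpq.symm⟩ hq,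
    fun h _ ⟨p, hp, hpq⟩ hq => h hp ⟨_, hq, hpq.symm⟩⟩

theorem disjoint_wordNbhd_of_subset_wordNbhd (hZ : Z ⊆ wordNbhd S Λ Q)
    (h : Disjoint (wordNbhd S (R + Λ) P) Q) : Disjoint (wordNbhd S R P) Z := by
  refine Set.disjoint_left.2 fun z ⟨p, hp, hpz⟩ hz => ?_
  obtain ⟨q, hq, hqz⟩ := hZ hz
  exact Set.disjoint_left.1 h ⟨p, hp, hpz.trans hqz.symm⟩ hq

theorem eventually_subset_wordNbhd_of_subset (h : Z ⊆ wordNbhd S R P) :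
    ∀ᶠ R' in atTop, Z ⊆ wordNbhd S R' P :=
  Filter.eventually_atTop.2 ⟨R, fun _ hR => h.trans (wordNbhd_mono hR subset_rfl)⟩

end wordNbhd

/-- The endpoints of the edges of the coboundary `δW` in the Cayley graph of `(G, S)`. -/
def coboundary (S : Finset G) (W : Set G) : Set G :=
  {p | ∃ s, (s ∈ S ∨ s⁻¹ ∈ S) ∧ ¬(p ∈ W ↔ p * s ∈ W)}

section coboundary

variable {W V Y : Set G}

theorem coboundary_compl : coboundary S Wᶜ = coboundary S W := by
  simp only [coboundary, Set.mem_compl_iff, not_iff_not]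

theorem coboundary_smul (c : G) : coboundary S (c • W) = c • coboundary S W := by
  ext p
  simp only [coboundary, Set.mem_smul_set_iff_inv_smul_mem, Set.mem_ofPred_eq, smul_eq_mul,
    mul_assoc]

theorem mem_iff_mem_of_inBall (hW : ∀ z, InBall S R x z → z ∉ coboundary S W)
    (hy : InBall S R x y) : x ∈ W ↔ y ∈ W := by
  obtain ⟨l, hl, hlen, rfl⟩ := hy
  induction l generalizing x R with
  | nil => simp
  | cons s l ih =>
    have hs : s ∈ S ∨ s⁻¹ ∈ S := hl s (by simp)
    have hstep : x ∈ W ↔ x * s ∈ W := by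
      by_contra h
      exact hW x (InBall.refl S R x) ⟨s, hs, h⟩
    rw [hstep, List.prod_cons, ← mul_assoc]
    refine ih (R := R - 1) (fun z hz => hW z ((InBall.mul_letter hs x).trans hz |>.mono ?_))
      (fun t ht => hl t (by simp [ht])) ?_
    all_goals simp only [List.length_cons] at hlen; omega

theorem exists_mem_coboundary_iff_mem (hS : Subgroup.closure (S : Set G) = ⊤)
    (hV : Disjoint W (coboundary S V)) (hx : x ∈ W) (hy : y ∉ W) :
    ∃ p ∈ W ∩ coboundary S W, (x ∈ V ↔ p ∈ V) := by
  obtain ⟨R, l, hl, -, rfl⟩ := InBall.exists_of_closure_eq_top hS x y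
  induction l generalizing x with
  | nil => simp_all
  | cons s l ih =>
    have hs : s ∈ S ∨ s⁻¹ ∈ S := hl s (by simp)
    by_cases hxs : x * s ∈ W
    · rw [List.prod_cons, ← mul_assoc] at hy
      obtain ⟨p, hp, hxp⟩ := ih hxs (fun t ht => hl t (by simp [ht])) hy
      refine ⟨p, hp, Iff.trans ?_ hxp⟩
      by_contra h
      exact Set.disjoint_left.1 hV hx ⟨s, hs, h⟩
    · exact ⟨x, ⟨hx, s, hs, by tauto⟩, Iff.rfl⟩

end coboundary

section walls

variable {H K : Subgroup G} {V Y : Set G}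

theorem mem_iff_mem_of_disjoint_wordNbhd {c h k : G}
    (hH : Subgroup.closure {t | t ∈ H ∧ InBall S Λ 1 t} = H)
    (hV : Disjoint (wordNbhd S Λ (c • (H : Set G))) (coboundary S V)) (hh : h ∈ H) (hk : k ∈ H) :
    c * h ∈ V ↔ c * k ∈ V := by
  suffices key : ∀ k ∈ H, ∀ h ∈ H, (c * h ∈ V ↔ c * (h * k) ∈ V) by
    simpa using key (h⁻¹ * k) (mul_mem (inv_mem hh) hk) h hh
  intro k hk
  rw [← hH] at hk
  induction hk using Subgroup.closure_induction with
  | mem t ht =>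
    intro h hh
    refine mem_iff_mem_of_inBall
      (fun z hz => Set.disjoint_left.1 hV ⟨c * h, Set.smul_mem_smul_set hh, hz⟩) ?_
    simpa [mul_assoc] using (InBall.mul_left_iff (c * h)).2 ht.2
  | one => simp
  | mul x y hx _ ihx ihy =>
    intro h hh
    rw [← mul_assoc h x y]
    exact (ihx h hh).trans (ihy (h * x) (mul_mem hh (hH ▸ hx)))
  | inv x hx ih =>
    intro h hh
    simpa using (ih (h * x⁻¹) (mul_mem hh (inv_mem (hH ▸ hx)))).symm

theorem mem_iff_mem_of_mem_coboundary {c p q : G}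
    (hH : Subgroup.closure {t | t ∈ H ∧ InBall S Λ 1 t} = H)
    (hY : coboundary S Y ⊆ wordNbhd S Λ (c • (H : Set G)))
    (hV : Disjoint (wordNbhd S (Λ + Λ) (c • (H : Set G))) (coboundary S V))
    (hp : p ∈ coboundary S Y) (hq : q ∈ coboundary S Y) : p ∈ V ↔ q ∈ V := by
  have near_coset : ∀ p ∈ coboundary S Y, ∃ h ∈ H, (p ∈ V ↔ c * h ∈ V) := by
    intro p hp
    obtain ⟨_, ⟨h, hh, rfl⟩, hhp⟩ := hY hp
    exact ⟨h, hh, mem_iff_mem_of_inBall (fun z hz => Set.disjoint_left.1 hV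
      ⟨c • h, Set.smul_mem_smul_set hh, hhp.trans hz⟩) hhp.symm⟩
  obtain ⟨h, hh, hph⟩ := near_coset p hp
  obtain ⟨k, hk, hqk⟩ := near_coset q hq
  exact hph.trans <| (mem_iff_mem_of_disjoint_wordNbhd hH
    (hV.mono_left (wordNbhd_mono (Nat.le_add_right Λ Λ) subset_rfl)) hh hk).trans hqk.symm

theorem corner_empty_of_coboundary_subset (hS : Subgroup.closure (S : Set G) = ⊤)
    (hV : coboundary S V ⊆ Y)
    (hY : ∀ p ∈ coboundary S Y, ∀ q ∈ coboundary S Y, p ∈ V ↔ q ∈ V) :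
    Y = ∅ ∨ Yᶜ ∩ V = ∅ ∨ Yᶜ ∩ Vᶜ = ∅ := by
  simp only [← Set.not_nonempty_iff_eq_empty, ← not_and_or]
  rintro ⟨⟨y, hy⟩, ⟨z, hz, hzV⟩, ⟨w, hw, hwV⟩⟩
  have hdisj : Disjoint Yᶜ (coboundary S V) :=
    Set.disjoint_left.2 fun x hx hxV => hx (hV hxV)
  obtain ⟨p, ⟨-, hp⟩, hzp⟩ := exists_mem_coboundary_iff_mem hS hdisj hz (not_not.2 hy)
  obtain ⟨q, ⟨-, hq⟩, hwq⟩ := exists_mem_coboundary_iff_mem hS hdisj hw (not_not.2 hy)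
  rw [coboundary_compl] at hp hq
  exact hwV (hwq.2 ((hY p hp q hq).1 (hzp.1 hzV)))

theorem corner_empty_of_coboundary_mem_iff (hS : Subgroup.closure (S : Set G) = ⊤)
    (hY : ∀ p ∈ coboundary S Y, ∀ q ∈ coboundary S Y, p ∈ V ↔ q ∈ V)
    (hV : ∀ p ∈ coboundary S V, ∀ q ∈ coboundary S V, p ∈ Y ↔ q ∈ Y) :
    Y ∩ V = ∅ ∨ Y ∩ Vᶜ = ∅ ∨ Yᶜ ∩ V = ∅ ∨ Yᶜ ∩ Vᶜ = ∅ := by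
  by_cases h : ∃ p ∈ coboundary S V, p ∈ Y
  · obtain ⟨p, hp, hpY⟩ := h
    rcases corner_empty_of_coboundary_subset hS (fun q hq => (hV p hp q hq).1 hpY) hY
      with h | h | h
    · simp [h]
    · tauto
    · tauto
  · simp only [not_exists, not_and] at h
    rcases corner_empty_of_coboundary_subset (Y := Yᶜ) hS h
      (by simpa only [coboundary_compl] using hY) with h | h | h
    · simp [Set.compl_empty_iff.1 h]
    · rw [compl_compl] at h; tauto
    · rw [compl_compl] at h; tauto

theorem corner_empty_of_disjoint_wordNbhd (hS : Subgroup.closure (S : Set G) = ⊤) {a b : G}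
    {A B : Set G}
    (hH : Subgroup.closure {t | t ∈ H ∧ InBall S Λ 1 t} = H)
    (hK : Subgroup.closure {t | t ∈ K ∧ InBall S Λ 1 t} = K)
    (hA : coboundary S A ⊆ wordNbhd S Λ (a • (H : Set G)))
    (hB : coboundary S B ⊆ wordNbhd S Λ (b • (K : Set G)))
    (hfar : Disjoint (wordNbhd S (Λ + Λ + Λ) (a • (H : Set G))) (b • (K : Set G))) :
    A ∩ B = ∅ ∨ A ∩ Bᶜ = ∅ ∨ Aᶜ ∩ B = ∅ ∨ Aᶜ ∩ Bᶜ = ∅ :=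
  corner_empty_of_coboundary_mem_iff hS
    (fun _ hp _ hq => mem_iff_mem_of_mem_coboundary hH hA
      (disjoint_wordNbhd_of_subset_wordNbhd hB hfar) hp hq)
    (fun _ hp _ hq => mem_iff_mem_of_mem_coboundary hK hB
      (disjoint_wordNbhd_of_subset_wordNbhd hA (disjoint_wordNbhd_comm.1 hfar).symm) hp hq)

end walls

section almostInvariant

variable {H : Subgroup G} {W X Y Z : Set G}

theorem hFin_empty (H : Subgroup G) : HFin H (∅ : Set G) :=
  ⟨∅, Set.empty_subset _⟩

theorem HFin.smul_of_mem {h : G} (hh : h ∈ H) (hW : HFin H W) : HFin H (h • W) := by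
  obtain ⟨F, hF⟩ := hW
  refine ⟨F, ?_⟩
  rintro _ ⟨w, hw, rfl⟩
  obtain ⟨k, hk, f, hf, rfl⟩ := hF hw
  exact ⟨h * k, mul_mem hh hk, f, hf, by simp [mul_assoc]⟩

theorem HFin.eventually_subset_wordNbhd (hS : Subgroup.closure (S : Set G) = ⊤)
    (hW : HFin H W) : ∀ᶠ R in atTop, W ⊆ wordNbhd S R H := by
  obtain ⟨F, hF⟩ := hW
  filter_upwards [(eventually_all_finset F).2 fun f _ => InBall.eventually_atTop hS 1 f]
    with R hR
  intro w hw
  obtain ⟨h, hh, f, hf, rfl⟩ := hF hw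
  exact ⟨h, hh, by simpa using (InBall.mul_left_iff h).2 (hR f hf)⟩

theorem HFin.eventually_subset_wordNbhd_compl (hS : Subgroup.closure (S : Set G) = ⊤)
    (hY : ∀ h ∈ H, h • Y = Y) (hYc : Yᶜ.Nonempty) (hZ : HFin H Z) :
    ∀ᶠ R in atTop, Z ⊆ wordNbhd S R Yᶜ := by
  obtain ⟨d, hd⟩ := hYc
  obtain ⟨L, hL⟩ := InBall.exists_of_closure_eq_top hS 1 d
  obtain ⟨N, hN⟩ := (hZ.eventually_subset_wordNbhd hS).exists
  have hH : (H : Set G) ⊆ wordNbhd S L Yᶜ := fun h hh =>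
    ⟨h * d, fun hdY => hd (Set.smul_mem_smul_set_iff.1 (show h • d ∈ h • Y by rwa [hY h hh])),
      (by simpa using (InBall.mul_left_iff h).2 hL : InBall S L h (h * d)).symm⟩
  exact eventually_subset_wordNbhd_of_subset (hN.trans ((wordNbhd_mono le_rfl hH).trans
    wordNbhd_wordNbhd_subset))

theorem AlmostInv.compl_s10 (hX : AlmostInv H X) : AlmostInv H Xᶜ := by
  refine ⟨fun h hh => by rw [Set.smul_set_compl, hX.1 h hh], fun a => ?_⟩
  rw [Set.image_mul_right, Set.preimage_compl, compl_sdiff_compl, compl_sdiff_compl,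
    Set.union_comm, ← Set.image_mul_right]
  exact hX.2 a

theorem AlmostInv.hFin_coboundary (hX : AlmostInv H X) (S : Finset G) :
    HFin H (coboundary S X) := by
  classical
  choose F hF using hX.2
  refine ⟨(S ∪ S⁻¹).biUnion fun s => (F s).image (· * s⁻¹), ?_⟩
  rintro p ⟨s, hs, hps⟩
  have hps' : p * s ∈ X \ (· * s) '' X ∪ (· * s) '' X \ X := by
    simp only [Set.image_mul_right, Set.mem_union, Set.mem_sdiff, Set.mem_preimage,
      mul_inv_cancel_right]
    tauto
  obtain ⟨h, hh, f, hf, hhf⟩ := hF s hps'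
  refine ⟨h, hh, f * s⁻¹, ?_, show h * (f * s⁻¹) = p by
    rw [← mul_assoc, show h * f = p * s from hhf, mul_inv_cancel_right]⟩
  simp only [Finset.coe_biUnion, Finset.coe_image, Set.mem_iUnion, Set.mem_image]
  exact ⟨s, by simpa [Finset.mem_inv'] using hs, f, hf, rfl⟩

theorem Subgroup.FG.eventually_closure_inBall (hS : Subgroup.closure (S : Set G) = ⊤)
    (hH : H.FG) : ∀ᶠ Λ in atTop, Subgroup.closure {t | t ∈ H ∧ InBall S Λ 1 t} = H := by
  obtain ⟨T, hT⟩ := hH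
  filter_upwards [(eventually_all_finset T).2 fun t _ => InBall.eventually_atTop hS 1 t]
    with Λ hΛ
  refine le_antisymm ((Subgroup.closure_le H).2 fun t ht => ht.1) ?_
  conv_lhs => rw [← hT]
  exact Subgroup.closure_mono fun t ht => ⟨hT ▸ Subgroup.subset_closure ht, hΛ t ht⟩

end almostInvariant

theorem inv_smul_corner_eq {K K' : Subgroup G} {Y Y' : Set G} (hY : ∀ h ∈ K, h • Y = Y)
    (hY' : ∀ k ∈ K', k • Y' = Y') {a b h k : G} (hh : h ∈ K) (hk : k ∈ K') :
    (a * h)⁻¹ • (a • Y ∩ (b • Y')ᶜ) = Y ∩ (((a * h)⁻¹ * (b * k)) • Y')ᶜ := by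
  have hA : (a * h)⁻¹ • a • Y = Y := by
    rw [smul_smul, mul_inv_rev, inv_mul_cancel_right, hY _ (inv_mem hh)]
  have hB : ((a * h)⁻¹ * (b * k)) • Y' = (a * h)⁻¹ • b • Y' := by
    rw [← mul_assoc, ← smul_smul, hY' k hk, smul_smul]
  rw [Set.smul_set_inter, Set.smul_set_compl, hA, hB]

theorem smul_corner_subset_wordNbhd_compl {K K' : Subgroup G} {Y Y' : Set G}
    (hY : ∀ h ∈ K, h • Y = Y) (hY' : ∀ k ∈ K', k • Y' = Y') {a b h k : G} (hh : h ∈ K)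
    (hk : k ∈ K') (hsmall : HFin K (a⁻¹ • (a • Y ∩ (b • Y')ᶜ)))
    (hR : HFin K (Y ∩ (((a * h)⁻¹ * (b * k)) • Y')ᶜ) →
      Y ∩ (((a * h)⁻¹ * (b * k)) • Y')ᶜ ⊆ wordNbhd S R Yᶜ) :
    a • Y ∩ (b • Y')ᶜ ⊆ wordNbhd S R (a • Y)ᶜ := by
  have hcorner := inv_smul_corner_eq (a := a) (b := b) hY hY' hh hk
  have hfin : HFin K ((a * h)⁻¹ • (a • Y ∩ (b • Y')ᶜ)) := by
    rw [mul_inv_rev, ← smul_smul]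
    exact hsmall.smul_of_mem (inv_mem hh)
  calc a • Y ∩ (b • Y')ᶜ = (a * h) • ((a * h)⁻¹ • (a • Y ∩ (b • Y')ᶜ)) :=
        (smul_inv_smul _ _).symm
    _ ⊆ (a * h) • wordNbhd S R Yᶜ := Set.smul_set_mono (hcorner ▸ hR (hcorner ▸ hfin))
    _ = wordNbhd S R (a • Y)ᶜ := by
        rw [← wordNbhd_smul, Set.smul_set_compl, ← smul_smul, hY h hh]

theorem exists_corner_subset_wordNbhd_compl (hS : Subgroup.closure (S : Set G) = ⊤)
    {ι : Type*} [Finite ι] {K : ι → Subgroup G} {Y : ι → Set G} (hK : ∀ k, (K k).FG)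
    (hY : ∀ k, AlmostInv (K k) (Y k)) :
    ∃ R, ∀ k k' (a b : G), HFin (K k) (a⁻¹ • (a • Y k ∩ (b • Y k')ᶜ)) →
      (a • Y k ∩ b • Y k').Nonempty → ((a • Y k)ᶜ ∩ b • Y k').Nonempty →
      ((a • Y k)ᶜ ∩ (b • Y k')ᶜ).Nonempty →
      a • Y k ∩ (b • Y k')ᶜ ⊆ wordNbhd S R (a • Y k)ᶜ := by
  obtain ⟨Λ, hgen, hcob⟩ : ∃ Λ,
      (∀ k, Subgroup.closure {t | t ∈ K k ∧ InBall S Λ 1 t} = K k) ∧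
      ∀ k, coboundary S (Y k) ⊆ wordNbhd S Λ (K k) :=
    ((eventually_all.2 fun k => (hK k).eventually_closure_inBall hS).and
      (eventually_all.2 fun k =>
        ((hY k).hFin_coboundary S).eventually_subset_wordNbhd hS)).exists
  -- Up to the action of `K k`, two walls within distance `Λ + Λ + Λ` of each other form one of
  -- finitely many configurations `(k, k', u)`.
  obtain ⟨R, hR⟩ : ∃ R, ∀ k k', ∀ u ∈ {u | InBall S (Λ + Λ + Λ) 1 u},
      HFin (K k) (Y k ∩ (u • Y k')ᶜ) → (Y k)ᶜ.Nonempty →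
      Y k ∩ (u • Y k')ᶜ ⊆ wordNbhd S R (Y k)ᶜ :=
    (eventually_all.2 fun k => eventually_all.2 fun k' =>
      (finite_setOf_inBall_one S _).eventually_all.2 fun _ _ =>
        eventually_imp_distrib_left.2 fun hfin => eventually_imp_distrib_left.2 fun hne =>
          hfin.eventually_subset_wordNbhd_compl hS (hY k).1 hne).exists
  refine ⟨R, fun k k' a b hsmall hAB hAcB hAcBc => ?_⟩
  have hwall : ∀ j (c : G), coboundary S (c • Y j) ⊆ wordNbhd S Λ (c • (K j : Set G)) :=
    fun j c => by
      rw [coboundary_smul, wordNbhd_smul]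
      exact Set.smul_set_mono (hcob j)
  by_cases hfar : Disjoint (wordNbhd S (Λ + Λ + Λ) (a • (K k : Set G))) (b • (K k' : Set G))
  · intro g hg
    rcases corner_empty_of_disjoint_wordNbhd hS (hgen k) (hgen k') (hwall k a) (hwall k' b) hfar
      with h | h | h | h
    exacts [(hAB.ne_empty h).elim, (h ▸ hg : g ∈ (∅ : Set G)).elim, (hAcB.ne_empty h).elim,
      (hAcBc.ne_empty h).elim]
  obtain ⟨_, ⟨_, ⟨h, hh, rfl⟩, hhk⟩, ⟨k₂, hk₂, rfl⟩⟩ := Set.not_disjoint_iff.1 hfar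
  have hu : InBall S (Λ + Λ + Λ) 1 ((a * h)⁻¹ * (b * k₂)) := by
    simpa using (InBall.mul_left_iff (a * h)⁻¹).2 hhk
  have hne : (Y k)ᶜ.Nonempty := by
    rw [← Set.smul_set_nonempty (a := a), Set.smul_set_compl]
    exact hAcB.mono Set.inter_subset_left
  exact smul_corner_subset_wordNbhd_compl (hY k).1 (hY k').1 hh hk₂ hsmall
    fun hfin => hR k k' _ hu hfin hne

section withCompl

variable {ι : Type*}

def withCompl (X : ι → Set G) : ι × Bool → Set G
  | (i, true) => X i
  | (i, false) => (X i)ᶜ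

theorem exists_eq_smul_withCompl {X : ι → Set G} {A : Set G} {i : ι} {g : G}
    (hA : A = g • X i ∨ A = (g • X i)ᶜ) : ∃ e, A = g • withCompl X (i, e) := by
  rcases hA with rfl | rfl
  exacts [⟨true, rfl⟩, ⟨false, Set.smul_set_compl.symm⟩]

theorem almostInv_withCompl {H : ι → Subgroup G} {X : ι → Set G}
    (hX : ∀ i, AlmostInv (H i) (X i)) : ∀ k, AlmostInv (H k.1) (withCompl X k)
  | (i, true) => hX i
  | (i, false) => (hX i).compl_s10

theorem nonempty_of_not_smallFor {H : ι → Subgroup G} {X : ι → Set G} {A W : Set G} {i : ι}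
    {g : G} (hA : A = g • X i ∨ A = (g • X i)ᶜ) (hW : ¬ SmallFor H X A W) : W.Nonempty :=
  Set.nonempty_iff_ne_empty.2 fun h => hW ⟨i, g, hA, by
    rw [h, Set.smul_set_empty]
    exact hFin_empty _⟩

end withCompl

end

theorem containment_neighbourhood_general
    {G : Type*} [Group G] {n : ℕ} (S : Finset G)
    (hS : Subgroup.closure (S : Set G) = ⊤)
    (H : Fin n → Subgroup G) (hfg : ∀ i, (H i).FG)
    (X : Fin n → Set G) (hnt : ∀ i, NontrivAI (H i) (X i)) :
    ∃ R : ℕ, 0 < R ∧ ∀ A ∈ ESet X, ∀ B ∈ ESet X, LeE H X A B →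
      ∀ g ∈ A, {x : G | InBall S R g x} ⊆ A → g ∈ B := by
  obtain ⟨R, hR⟩ := exists_corner_subset_wordNbhd_compl hS (K := fun k : Fin n × Bool => H k.1)
    (fun k => hfg k.1) (almostInv_withCompl fun i => (hnt i).1)
  refine ⟨R + 1, R.succ_pos, ?_⟩
  rintro A - B ⟨j, b, hB⟩ (hempty | ⟨⟨i, a, hA, hsmall⟩, hAB, hAcB, hAcBc⟩) g hgA hball <;>
    by_contra hgB
  · exact (hempty ▸ ⟨hgA, hgB⟩ : g ∈ (∅ : Set G))
  have hAB' := nonempty_of_not_smallFor hA hAB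
  have hAcB' := nonempty_of_not_smallFor hA hAcB
  have hAcBc' := nonempty_of_not_smallFor hA hAcBc
  obtain ⟨e, rfl⟩ := exists_eq_smul_withCompl hA
  obtain ⟨f, rfl⟩ := exists_eq_smul_withCompl hB
  obtain ⟨p, hpA, hgp⟩ := wordNbhd_mono (Nat.le_succ R) subset_rfl <|
    hR (i, e) (j, f) a b hsmall hAB' hAcB' hAcBc' ⟨hgA, hgB⟩
  exact hpA (hball hgp.symm)

/-- There is `R > 0` such that whenever `A ≤ B` in `E` and the ball of radius `R`
about `g` is contained in `A`, then `g ∈ B`. -/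
theorem containment_neighbourhood
    {G : Type*} [Group G] {n : ℕ} (S : Finset G)
    (hS : Subgroup.closure (S : Set G) = ⊤)
    (H : Fin n → Subgroup G) (hfg : ∀ i, (H i).FG)
    (X : Fin n → Set G) (hnt : ∀ i, NontrivAI (H i) (X i))
    (hgp : GoodPos H X) :
    ∃ R : ℕ, 0 < R ∧ ∀ A ∈ ESet X, ∀ B ∈ ESet X, LeE H X A B →
      ∀ g ∈ A, {x : G | InBall S R g x} ⊆ A → g ∈ B :=
  containment_neighbourhood_general S hS H hfg X hnt
end
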